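/- Let g : ℝ × ℝ × ℝ → ℝ be twice continuously differentiable (C²) and define F on {(x₁,x₂,x₃) ∈ ℝ³ : x₁² + x₂² > 0} by F(x₁,x₂,x₃) = g(x₁, x_p, x) where x_p = √(x₁² + x₂²) and x = √(x₁² + x₂² + x₃²). Then at every such point, ΔF = g₁₁ + g₂₂ + g₃₃ + 2·((x₁/x_p)·g₁₂ + (x₁/x)·g₁₃ + (x_p/x)·g₂₃) + (1/x_p)·g₂ + (2/x)·g₃, where all partial derivatives gᵢ, gᵢⱼ of g (with respect to its i-th and j-th arguments) are evaluated at (x₁, x_p, x) (the Laplacian in the nested rectangular coordinate system (x₁, x_p, x)). -/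

import Mathlib

/-- The Laplacian `∂²F/∂x₁² + ∂²F/∂x₂² + ∂²F/∂x₃²` of a function `F : ℝ → ℝ → ℝ → ℝ`
(curried function of three real variables) at the point `(a, b, c)`. -/
noncomputable def lap3 (F : ℝ → ℝ → ℝ → ℝ) (a b c : ℝ) : ℝ :=
  deriv (fun s => deriv (fun u => F u b c) s) a +
  deriv (fun s => deriv (fun u => F a u c) s) b +
  deriv (fun s => deriv (fun u => F a b u) s) c

/-- Partial derivative of `g : ℝ × ℝ × ℝ → ℝ` with respect to its first argument. -/
noncomputable def pd1 (g : ℝ × ℝ × ℝ → ℝ) (p : ℝ × ℝ × ℝ) : ℝ :=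
  deriv (fun t => g (t, p.2.1, p.2.2)) p.1

/-- Partial derivative of `g : ℝ × ℝ × ℝ → ℝ` with respect to its second argument. -/
noncomputable def pd2 (g : ℝ × ℝ × ℝ → ℝ) (p : ℝ × ℝ × ℝ) : ℝ :=
  deriv (fun t => g (p.1, t, p.2.2)) p.2.1

/-- Partial derivative of `g : ℝ × ℝ × ℝ → ℝ` with respect to its third argument. -/
noncomputable def pd3 (g : ℝ × ℝ × ℝ → ℝ) (p : ℝ × ℝ × ℝ) : ℝ :=
  deriv (fun t => g (p.1, p.2.1, t)) p.2.2

/-! Each summand of the Laplacian is a second derivative of `g` along a curve: moving `xᵢ` alone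
traces a curve `γ` in the nested coordinates `(x₁, x_p, x)`, and the chain rule gives
`(g ∘ γ)'' = γ'ᵀ (D²g) γ' + ∇g · γ''`. Along the `xᵢ`-line, `x_p` and `x` are constant or of the form
`√(xᵢ² + c)` with `c` constant, with first derivative `xᵢ / √(xᵢ² + c)` and second derivative
`c / √(xᵢ² + c)³`. Summing over `i`, the symmetry of `D²g` and the identities `x_p² = x₁² + x₂²`,
`x² = x₁² + x₂² + x₃²` collapse the sum to the formula. -/

open Real Filter Topology

section Partials

variable {g : ℝ × ℝ × ℝ → ℝ} {p : ℝ × ℝ × ℝ}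

lemma pd1_eq_fderiv (hg : DifferentiableAt ℝ g p) : pd1 g p = fderiv ℝ g p (1, 0, 0) :=
  (hg.hasFDerivAt.comp_hasDerivAt p.1
    ((hasDerivAt_id _).prodMk ((hasDerivAt_const _ _).prodMk (hasDerivAt_const _ _)))).deriv

lemma pd2_eq_fderiv (hg : DifferentiableAt ℝ g p) : pd2 g p = fderiv ℝ g p (0, 1, 0) :=
  (hg.hasFDerivAt.comp_hasDerivAt p.2.1
    ((hasDerivAt_const _ _).prodMk ((hasDerivAt_id _).prodMk (hasDerivAt_const _ _)))).deriv

lemma pd3_eq_fderiv (hg : DifferentiableAt ℝ g p) : pd3 g p = fderiv ℝ g p (0, 0, 1) :=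
  (hg.hasFDerivAt.comp_hasDerivAt p.2.2
    ((hasDerivAt_const _ _).prodMk ((hasDerivAt_const _ _).prodMk (hasDerivAt_id _)))).deriv

lemma pd1_eq_fun_fderiv (hg : Differentiable ℝ g) : pd1 g = fun p => fderiv ℝ g p (1, 0, 0) :=
  funext fun p => pd1_eq_fderiv (hg p)

lemma pd2_eq_fun_fderiv (hg : Differentiable ℝ g) : pd2 g = fun p => fderiv ℝ g p (0, 1, 0) :=
  funext fun p => pd2_eq_fderiv (hg p)

lemma pd3_eq_fun_fderiv (hg : Differentiable ℝ g) : pd3 g = fun p => fderiv ℝ g p (0, 0, 1) :=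
  funext fun p => pd3_eq_fderiv (hg p)

variable {n : WithTop ℕ∞}

lemma contDiff_pd1 (hg : ContDiff ℝ (n + 1) g) : ContDiff ℝ n (pd1 g) := by
  rw [pd1_eq_fun_fderiv (hg.differentiable (by simp))]
  exact (hg.fderiv_right le_rfl).clm_apply contDiff_const

lemma contDiff_pd2 (hg : ContDiff ℝ (n + 1) g) : ContDiff ℝ n (pd2 g) := by
  rw [pd2_eq_fun_fderiv (hg.differentiable (by simp))]
  exact (hg.fderiv_right le_rfl).clm_apply contDiff_const

lemma contDiff_pd3 (hg : ContDiff ℝ (n + 1) g) : ContDiff ℝ n (pd3 g) := by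
  rw [pd3_eq_fun_fderiv (hg.differentiable (by simp))]
  exact (hg.fderiv_right le_rfl).clm_apply contDiff_const

lemma fderiv_fderiv_apply_comm (hg : ContDiff ℝ 2 g) (v w : ℝ × ℝ × ℝ) :
    fderiv ℝ (fun q => fderiv ℝ g q v) p w = fderiv ℝ (fun q => fderiv ℝ g q w) p v := by
  have hdg : DifferentiableAt ℝ (fderiv ℝ g) p :=
    (hg.fderiv_right (m := 1) le_rfl).differentiable one_ne_zero p
  rw [fderiv_clm_apply hdg (differentiableAt_const _),
    fderiv_clm_apply hdg (differentiableAt_const _)]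
  simpa using (hg.contDiffAt.isSymmSndFDerivAt (by simp)).eq w v

lemma pd1_pd2_comm (hg : ContDiff ℝ 2 g) (p : ℝ × ℝ × ℝ) : pd1 (pd2 g) p = pd2 (pd1 g) p := by
  have hd := hg.differentiable two_ne_zero
  rw [pd1_eq_fderiv ((contDiff_pd2 hg).differentiable one_ne_zero p),
    pd2_eq_fderiv ((contDiff_pd1 hg).differentiable one_ne_zero p),
    pd1_eq_fun_fderiv hd, pd2_eq_fun_fderiv hd]
  exact fderiv_fderiv_apply_comm hg _ _

lemma pd1_pd3_comm (hg : ContDiff ℝ 2 g) (p : ℝ × ℝ × ℝ) : pd1 (pd3 g) p = pd3 (pd1 g) p := by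
  have hd := hg.differentiable two_ne_zero
  rw [pd1_eq_fderiv ((contDiff_pd3 hg).differentiable one_ne_zero p),
    pd3_eq_fderiv ((contDiff_pd1 hg).differentiable one_ne_zero p),
    pd1_eq_fun_fderiv hd, pd3_eq_fun_fderiv hd]
  exact fderiv_fderiv_apply_comm hg _ _

lemma pd2_pd3_comm (hg : ContDiff ℝ 2 g) (p : ℝ × ℝ × ℝ) : pd2 (pd3 g) p = pd3 (pd2 g) p := by
  have hd := hg.differentiable two_ne_zero
  rw [pd2_eq_fderiv ((contDiff_pd3 hg).differentiable one_ne_zero p),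
    pd3_eq_fderiv ((contDiff_pd2 hg).differentiable one_ne_zero p),
    pd2_eq_fun_fderiv hd, pd3_eq_fun_fderiv hd]
  exact fderiv_fderiv_apply_comm hg _ _

variable {γ₁ γ₂ γ₃ : ℝ → ℝ} {a v₁ v₂ v₃ : ℝ}

lemma hasDerivAt_comp_curve (hg : DifferentiableAt ℝ g (γ₁ a, γ₂ a, γ₃ a))
    (h₁ : HasDerivAt γ₁ v₁ a) (h₂ : HasDerivAt γ₂ v₂ a) (h₃ : HasDerivAt γ₃ v₃ a) :
    HasDerivAt (fun t => g (γ₁ t, γ₂ t, γ₃ t))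
      (pd1 g (γ₁ a, γ₂ a, γ₃ a) * v₁ + pd2 g (γ₁ a, γ₂ a, γ₃ a) * v₂ +
        pd3 g (γ₁ a, γ₂ a, γ₃ a) * v₃) a := by
  refine (hg.hasFDerivAt.comp_hasDerivAt a (h₁.prodMk (h₂.prodMk h₃))).congr_deriv ?_
  have hv : ((v₁, v₂, v₃) : ℝ × ℝ × ℝ) =
      v₁ • ((1 : ℝ), (0 : ℝ), (0 : ℝ)) + v₂ • ((0 : ℝ), (1 : ℝ), (0 : ℝ)) +
        v₃ • ((0 : ℝ), (0 : ℝ), (1 : ℝ)) := by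
    simp
  rw [pd1_eq_fderiv hg, pd2_eq_fderiv hg, pd3_eq_fderiv hg, hv]
  simp only [map_add, map_smul, smul_eq_mul]
  ring

end Partials

section Curves

def HasSecondDerivAt (γ γ' : ℝ → ℝ) (γ'' a : ℝ) : Prop :=
  (∀ᶠ t in 𝓝 a, HasDerivAt γ (γ' t) t) ∧ HasDerivAt γ' γ'' a

lemma hasSecondDerivAt_id (a : ℝ) : HasSecondDerivAt (fun t => t) (fun _ => 1) 0 a :=
  ⟨.of_forall hasDerivAt_id', hasDerivAt_const a 1⟩

lemma hasSecondDerivAt_const (a c : ℝ) : HasSecondDerivAt (fun _ => c) (fun _ => 0) 0 a :=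
  ⟨.of_forall fun t => hasDerivAt_const t c, hasDerivAt_const a 0⟩

variable {g : ℝ × ℝ × ℝ → ℝ} {γ₁ γ₂ γ₃ γ₁' γ₂' γ₃' : ℝ → ℝ} {a d₁ d₂ d₃ : ℝ}

lemma hasDerivAt_deriv_comp_curve (hg : ContDiff ℝ 2 g) (h₁ : HasSecondDerivAt γ₁ γ₁' d₁ a)
    (h₂ : HasSecondDerivAt γ₂ γ₂' d₂ a) (h₃ : HasSecondDerivAt γ₃ γ₃' d₃ a) :
    HasDerivAt (deriv fun t => g (γ₁ t, γ₂ t, γ₃ t))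
      (pd1 (pd1 g) (γ₁ a, γ₂ a, γ₃ a) * γ₁' a ^ 2 + pd2 (pd2 g) (γ₁ a, γ₂ a, γ₃ a) * γ₂' a ^ 2 +
        pd3 (pd3 g) (γ₁ a, γ₂ a, γ₃ a) * γ₃' a ^ 2 +
        2 * (pd2 (pd1 g) (γ₁ a, γ₂ a, γ₃ a) * γ₁' a * γ₂' a +
          pd3 (pd1 g) (γ₁ a, γ₂ a, γ₃ a) * γ₁' a * γ₃' a +
          pd3 (pd2 g) (γ₁ a, γ₂ a, γ₃ a) * γ₂' a * γ₃' a) +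
        (pd1 g (γ₁ a, γ₂ a, γ₃ a) * d₁ + pd2 g (γ₁ a, γ₂ a, γ₃ a) * d₂ +
          pd3 g (γ₁ a, γ₂ a, γ₃ a) * d₃)) a := by
  obtain ⟨hγ₁, h₁⟩ := h₁
  obtain ⟨hγ₂, h₂⟩ := h₂
  obtain ⟨hγ₃, h₃⟩ := h₃
  have hfirst : (deriv fun t => g (γ₁ t, γ₂ t, γ₃ t)) =ᶠ[𝓝 a] fun t =>
      pd1 g (γ₁ t, γ₂ t, γ₃ t) * γ₁' t + pd2 g (γ₁ t, γ₂ t, γ₃ t) * γ₂' t +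
        pd3 g (γ₁ t, γ₂ t, γ₃ t) * γ₃' t := by
    filter_upwards [hγ₁, hγ₂, hγ₃] with t ht₁ ht₂ ht₃
    exact (hasDerivAt_comp_curve (hg.differentiable two_ne_zero _) ht₁ ht₂ ht₃).deriv
  have hpd₁ := hasDerivAt_comp_curve ((contDiff_pd1 hg).differentiable one_ne_zero _)
    hγ₁.self_of_nhds hγ₂.self_of_nhds hγ₃.self_of_nhds
  have hpd₂ := hasDerivAt_comp_curve ((contDiff_pd2 hg).differentiable one_ne_zero _)
    hγ₁.self_of_nhds hγ₂.self_of_nhds hγ₃.self_of_nhds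
  have hpd₃ := hasDerivAt_comp_curve ((contDiff_pd3 hg).differentiable one_ne_zero _)
    hγ₁.self_of_nhds hγ₂.self_of_nhds hγ₃.self_of_nhds
  refine ((((hpd₁.mul h₁).add (hpd₂.mul h₂)).add (hpd₃.mul h₃)).congr_of_eventuallyEq
    hfirst).congr_deriv ?_
  rw [pd1_pd2_comm hg, pd1_pd3_comm hg, pd2_pd3_comm hg]
  ring

end Curves

section SqrtOfQuadratic

variable {Q : ℝ → ℝ} {c a : ℝ}

lemma hasSecondDerivAt_sqrt_sq_add (hQ : ∀ t, Q t = t ^ 2 + c) (ha : 0 < Q a) :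
    HasSecondDerivAt (fun t => √(Q t)) (fun t => t / √(Q t)) (c / √(Q a) ^ 3) a := by
  obtain rfl : Q = fun t => t ^ 2 + c := funext hQ
  have hfirst : ∀ᶠ t in 𝓝 a, HasDerivAt (fun s => √(s ^ 2 + c)) (t / √(t ^ 2 + c)) t := by
    have hcont : Continuous fun t => t ^ 2 + c := by fun_prop
    filter_upwards [continuousAt_const.eventually_lt hcont.continuousAt ha] with t ht
    refine (((hasDerivAt_pow 2 t).add_const c).sqrt ht.ne').congr_deriv ?_
    field_simp
    ring
  refine ⟨hfirst, ((hasDerivAt_id' a).div hfirst.self_of_nhds (sqrt_pos.2 ha).ne').congr_deriv ?_⟩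
  have hsq : √(a ^ 2 + c) ^ 2 = a ^ 2 + c := sq_sqrt ha.le
  field_simp
  linear_combination hsq

end SqrtOfQuadratic

/-- For a `C²` function `g : ℝ × ℝ × ℝ → ℝ` and
`F (x₁, x₂, x₃) = g (x₁, x_p, x)` with `x_p = √(x₁² + x₂²)` and
`x = √(x₁² + x₂² + x₃²)`, at every point with `x₁² + x₂² > 0` the Laplacian of `F`
equals `g₁₁ + g₂₂ + g₃₃ + 2 ((x₁/x_p) g₁₂ + (x₁/x) g₁₃ + (x_p/x) g₂₃)
+ (1/x_p) g₂ + (2/x) g₃` evaluated at `(x₁, x_p, x)` — the Laplacian in the nested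
rectangular coordinate system `(x₁, x_p, x)`. -/
theorem laplacian_nested_coordinates_3d (g : ℝ × ℝ × ℝ → ℝ) (hg : ContDiff ℝ 2 g)
    (x₁ x₂ x₃ : ℝ) (h : 0 < x₁ ^ 2 + x₂ ^ 2) :
    lap3 (fun a b c =>
        g (a, Real.sqrt (a ^ 2 + b ^ 2), Real.sqrt (a ^ 2 + b ^ 2 + c ^ 2))) x₁ x₂ x₃ =
      pd1 (pd1 g) (x₁, Real.sqrt (x₁ ^ 2 + x₂ ^ 2), Real.sqrt (x₁ ^ 2 + x₂ ^ 2 + x₃ ^ 2)) +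
      pd2 (pd2 g) (x₁, Real.sqrt (x₁ ^ 2 + x₂ ^ 2), Real.sqrt (x₁ ^ 2 + x₂ ^ 2 + x₃ ^ 2)) +
      pd3 (pd3 g) (x₁, Real.sqrt (x₁ ^ 2 + x₂ ^ 2), Real.sqrt (x₁ ^ 2 + x₂ ^ 2 + x₃ ^ 2)) +
      2 * ((x₁ / Real.sqrt (x₁ ^ 2 + x₂ ^ 2)) *
            pd2 (pd1 g) (x₁, Real.sqrt (x₁ ^ 2 + x₂ ^ 2),
              Real.sqrt (x₁ ^ 2 + x₂ ^ 2 + x₃ ^ 2)) +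
          (x₁ / Real.sqrt (x₁ ^ 2 + x₂ ^ 2 + x₃ ^ 2)) *
            pd3 (pd1 g) (x₁, Real.sqrt (x₁ ^ 2 + x₂ ^ 2),
              Real.sqrt (x₁ ^ 2 + x₂ ^ 2 + x₃ ^ 2)) +
          (Real.sqrt (x₁ ^ 2 + x₂ ^ 2) / Real.sqrt (x₁ ^ 2 + x₂ ^ 2 + x₃ ^ 2)) *
            pd3 (pd2 g) (x₁, Real.sqrt (x₁ ^ 2 + x₂ ^ 2),
              Real.sqrt (x₁ ^ 2 + x₂ ^ 2 + x₃ ^ 2))) +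
      (1 / Real.sqrt (x₁ ^ 2 + x₂ ^ 2)) *
        pd2 g (x₁, Real.sqrt (x₁ ^ 2 + x₂ ^ 2), Real.sqrt (x₁ ^ 2 + x₂ ^ 2 + x₃ ^ 2)) +
      (2 / Real.sqrt (x₁ ^ 2 + x₂ ^ 2 + x₃ ^ 2)) *
        pd3 g (x₁, Real.sqrt (x₁ ^ 2 + x₂ ^ 2), Real.sqrt (x₁ ^ 2 + x₂ ^ 2 + x₃ ^ 2)) := by
  have hρ : 0 < x₁ ^ 2 + x₂ ^ 2 + x₃ ^ 2 := by positivity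
  have h₁ := hasDerivAt_deriv_comp_curve hg (hasSecondDerivAt_id x₁)
    (hasSecondDerivAt_sqrt_sq_add (Q := fun u => u ^ 2 + x₂ ^ 2) (fun _ => rfl) h)
    (hasSecondDerivAt_sqrt_sq_add (Q := fun u => u ^ 2 + x₂ ^ 2 + x₃ ^ 2)
      (fun _ => add_assoc _ _ _) hρ)
  have h₂ := hasDerivAt_deriv_comp_curve hg (hasSecondDerivAt_const x₂ x₁)
    (hasSecondDerivAt_sqrt_sq_add (Q := fun u => x₁ ^ 2 + u ^ 2) (fun _ => add_comm _ _) h)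
    (hasSecondDerivAt_sqrt_sq_add (Q := fun u => x₁ ^ 2 + u ^ 2 + x₃ ^ 2)
      (c := x₁ ^ 2 + x₃ ^ 2) (fun _ => by ring) hρ)
  have h₃ := hasDerivAt_deriv_comp_curve hg (hasSecondDerivAt_const x₃ x₁)
    (hasSecondDerivAt_const x₃ √(x₁ ^ 2 + x₂ ^ 2))
    (hasSecondDerivAt_sqrt_sq_add (Q := fun u => x₁ ^ 2 + x₂ ^ 2 + u ^ 2)
      (fun _ => add_comm _ _) hρ)
  simp only [lap3]
  rw [h₁.deriv, h₂.deriv, h₃.deriv]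
  have hr2 : √(x₁ ^ 2 + x₂ ^ 2) ^ 2 = x₁ ^ 2 + x₂ ^ 2 := sq_sqrt h.le
  have hρ2 : √(x₁ ^ 2 + x₂ ^ 2 + x₃ ^ 2) ^ 2 = x₁ ^ 2 + x₂ ^ 2 + x₃ ^ 2 := sq_sqrt hρ.le
  have hr : 0 < √(x₁ ^ 2 + x₂ ^ 2) := sqrt_pos.2 h
  have hρ' : 0 < √(x₁ ^ 2 + x₂ ^ 2 + x₃ ^ 2) := sqrt_pos.2 hρ
  generalize √(x₁ ^ 2 + x₂ ^ 2) = r at *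
  generalize √(x₁ ^ 2 + x₂ ^ 2 + x₃ ^ 2) = ρ at *
  field_simp
  linear_combination
    -(r * ρ ^ 3 * pd2 (pd2 g) (x₁, r, ρ) + 2 * r ^ 2 * ρ ^ 2 * pd3 (pd2 g) (x₁, r, ρ) +
        ρ ^ 3 * pd2 g (x₁, r, ρ)) * hr2 -
      (r ^ 3 * ρ * pd3 (pd3 g) (x₁, r, ρ) + 2 * r ^ 3 * pd3 g (x₁, r, ρ)) * hρ2
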